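/- Let k ≥ 2 and let H = K̄_[k]∘H2 be a graph in C_k. Then for every i ∈ [k] and every x ∈ [3]^k, the distance in H between the vertex i and the vertex x equals x_(i). -/

import Mathlib

open SimpleGraph

/-- `w` enumerates a `(k, m)`-completeness-resolving set of `G`:
`w` is injective, its range `W` is a proper subset of the vertex set, and the map
`u ↦ (dist (w 1) u, …, dist (w k) u)` is a bijection from `V ∖ W` onto `[m]^k`. -/
def IsCRS {V : Type*} (G : SimpleGraph V) {k : ℕ} (w : Fin k → V) (m : ℕ) : Prop :=
  Function.Injective w ∧ Set.range w ≠ Set.univ ∧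
    Function.Injective
      (fun u : {u : V // u ∉ Set.range w} => fun i : Fin k => G.dist (w i) u.1) ∧
    Set.range (fun u : {u : V // u ∉ Set.range w} => fun i : Fin k => G.dist (w i) u.1) =
      {x : Fin k → ℕ | ∀ i, 1 ≤ x i ∧ x i ≤ m}

/-- `G` is a `(k, m)`-completeness-resolvable graph. -/
def IsCRG {V : Type*} (G : SimpleGraph V) (k m : ℕ) : Prop :=
  ∃ w : Fin k → V, IsCRS G w m

/-- `G` is completeness-resolvable. -/
def CompletenessResolvable {V : Type*} (G : SimpleGraph V) : Prop :=
  ∃ (k m : ℕ) (w : Fin k → V), IsCRS G w m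

/-! ### The family `B_k`.
Tuples in `[2]^k` are modelled as functions `Fin k → Fin 2`, the `Fin 2`-value `j`
corresponding to the entry `j + 1 ∈ {1, 2}`. -/

/-- The graph `H1 ∘ H2` on `[k] ⊔ [2]^k`. -/
def comp2 {k : ℕ} (H1 : SimpleGraph (Fin k)) (H2 : SimpleGraph (Fin k → Fin 2)) :
    SimpleGraph (Fin k ⊕ (Fin k → Fin 2)) where
  Adj a b :=
    match a, b with
    | Sum.inl i, Sum.inl j => H1.Adj i j
    | Sum.inr x, Sum.inr y => H2.Adj x y
    | Sum.inl i, Sum.inr x => x i = 0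
    | Sum.inr x, Sum.inl i => x i = 0
  symm := ⟨by
    rintro (i | x) (j | y) h
    · exact SimpleGraph.Adj.symm (G := H1) h
    · exact h
    · exact h
    · exact SimpleGraph.Adj.symm (G := H2) h⟩
  loopless := ⟨by
    rintro (i | x) h
    · exact SimpleGraph.Adj.ne (G := H1) h rfl
    · exact SimpleGraph.Adj.ne (G := H2) h rfl⟩

/-- The defining condition of `B_k`: for each `i`, the edges of `H2` lying in the complete
bipartite graph `B_i^k` (i.e. joining a tuple with `i`-th entry `1` to one with `i`-th entry `2`)
cover every tuple all of whose entries on the closed neighbourhood of `i` in `H1` equal `2`. -/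
def BCond {k : ℕ} (H1 : SimpleGraph (Fin k)) (H2 : SimpleGraph (Fin k → Fin 2)) : Prop :=
  ∀ (i : Fin k) (x : Fin k → Fin 2),
    (∀ j : Fin k, (j = i ∨ H1.Adj i j) → x j = 1) →
    ∃ y : Fin k → Fin 2, H2.Adj x y ∧ y i ≠ x i

/-- The family `B_k`, as a set of graphs on `[k] ⊔ [2]^k`. -/
def Bset (k : ℕ) : Set (SimpleGraph (Fin k ⊕ (Fin k → Fin 2))) :=
  {G | ∃ H1 H2, BCond H1 H2 ∧ G = comp2 H1 H2}

/-- `H2` is `H1`-minimal. -/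
def H1Minimal {k : ℕ} (H1 : SimpleGraph (Fin k)) (H2 : SimpleGraph (Fin k → Fin 2)) : Prop :=
  comp2 H1 H2 ∈ Bset k ∧
    ∀ H2' : SimpleGraph (Fin k → Fin 2), H2' < H2 → comp2 H1 H2' ∉ Bset k

/-- The graph `U_k` on `[2]^k`, with unique edge `{(1,…,1), (2,…,2)}`. -/
def Uk (k : ℕ) : SimpleGraph (Fin k → Fin 2) :=
  SimpleGraph.fromEdgeSet {s(fun _ => (0 : Fin 2), fun _ => (1 : Fin 2))}

/-- The graph `V_k` on `[2]^k`, whose edges join `(2,…,2)` to the tuples having exactly one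
entry equal to `1`. -/
def Vk (k : ℕ) : SimpleGraph (Fin k → Fin 2) :=
  SimpleGraph.fromEdgeSet
    {e | ∃ i : Fin k, e = s(Function.update (fun _ => (1 : Fin 2)) i 0, fun _ => (1 : Fin 2))}

/-- The graph `R_k` on `[2]^k`: the perfect matching pairing each tuple with its complement. -/
def Rk (k : ℕ) : SimpleGraph (Fin k → Fin 2) :=
  SimpleGraph.fromRel fun x y => ∀ i, x i ≠ y i

/-- The hypercube graph `Q_k` on `[2]^k`: tuples are adjacent when they differ in exactly one
coordinate. -/
def Qk (k : ℕ) : SimpleGraph (Fin k → Fin 2) :=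
  SimpleGraph.fromRel fun x y => ∃ i, x i ≠ y i ∧ ∀ j, j ≠ i → x j = y j

/-! ### The family `C_k`.
Tuples in `[3]^k` are modelled as functions `Fin k → Fin 3`, the `Fin 3`-value `j`
corresponding to the entry `j + 1 ∈ {1, 2, 3}`. -/

/-- Entries `a` and `b` (of `{1,2,3}`, coded in `Fin 3`) satisfy `|a - b| ≤ 1`. -/
def near3 (a b : Fin 3) : Prop := (a : ℕ) ≤ (b : ℕ) + 1 ∧ (b : ℕ) ≤ (a : ℕ) + 1

/-- `{x, y}` is an edge of the bipartite graph `C_i^k` (between `i`-th entry `1` and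
`i`-th entry `2`, with all other entries differing by at most `1`). -/
def CAdj {k : ℕ} (i : Fin k) (x y : Fin k → Fin 3) : Prop :=
  ((x i = 0 ∧ y i = 1) ∨ (x i = 1 ∧ y i = 0)) ∧ ∀ t, t ≠ i → near3 (x t) (y t)

/-- `{x, y}` is an edge of the bipartite graph `D_i^k` (between `i`-th entry `2` and
`i`-th entry `3`, with all other entries differing by at most `1`). -/
def DAdj {k : ℕ} (i : Fin k) (x y : Fin k → Fin 3) : Prop :=
  ((x i = 1 ∧ y i = 2) ∨ (x i = 2 ∧ y i = 1)) ∧ ∀ t, t ≠ i → near3 (x t) (y t)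

/-- The graph `K̄_[k] ∘ H2` on `[k] ⊔ [3]^k`. -/
def comp3 {k : ℕ} (H2 : SimpleGraph (Fin k → Fin 3)) :
    SimpleGraph (Fin k ⊕ (Fin k → Fin 3)) where
  Adj a b :=
    match a, b with
    | Sum.inl _, Sum.inl _ => False
    | Sum.inr x, Sum.inr y => H2.Adj x y
    | Sum.inl i, Sum.inr x => x i = 0
    | Sum.inr x, Sum.inl i => x i = 0
  symm := ⟨by
    rintro (i | x) (j | y) h
    · exact h
    · exact h
    · exact h
    · exact SimpleGraph.Adj.symm (G := H2) h⟩
  loopless := ⟨by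
    rintro (i | x) h
    · exact h
    · exact SimpleGraph.Adj.ne (G := H2) h rfl⟩

/-- The defining condition of `C_k`: every edge of `H2` lies in some `C_i^k` or `D_i^k`;
for each `i` the edges of `H2` in `C_i^k` cover `[3]^k_i(2)`, and the edges of `H2` in
`D_i^k` cover `S_i^k`. -/
def CCond {k : ℕ} (H2 : SimpleGraph (Fin k → Fin 3)) : Prop :=
  (∀ x y, H2.Adj x y → ∃ i, CAdj i x y ∨ DAdj i x y) ∧
  (∀ (i : Fin k) (x : Fin k → Fin 3), x i = 1 → ∃ y, H2.Adj x y ∧ CAdj i x y) ∧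
  (∀ (i : Fin k) (x : Fin k → Fin 3), x i = 2 → (∀ t, x t ≠ 0) →
    ∃ y, H2.Adj x y ∧ DAdj i x y)

/-- The family `C_k`, as a set of graphs on `[k] ⊔ [3]^k`. -/
def Cset (k : ℕ) : Set (SimpleGraph (Fin k ⊕ (Fin k → Fin 3))) :=
  {G | ∃ H2, CCond H2 ∧ G = comp3 H2}

/-- The graph `Γ_k` on `[3]^k`: distinct tuples are adjacent when all their entries differ
by at most `1`. -/
def GammaK (k : ℕ) : SimpleGraph (Fin k → Fin 3) :=
  SimpleGraph.fromRel fun x y => ∀ i, near3 (x i) (y i)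

/-- `H2` is `k`-minimal. -/
def KMinimalC {k : ℕ} (H2 : SimpleGraph (Fin k → Fin 3)) : Prop :=
  comp3 H2 ∈ Cset k ∧
    ∀ H2' : SimpleGraph (Fin k → Fin 3), H2' < H2 → comp3 H2' ∉ Cset k


/-!
Along an edge of `K̄_[k] ∘ H2` the `i`-th entry rises by at most one, since every edge of `H2`
lies in some `C_j^k` or `D_j^k`. Hence a potential that is `0` at `i`, `2` at the other vertices
of `[k]` and `x_(i)` at `x` grows by at most one per step, which gives `dist(i, x) ≥ x_(i)`.
Conversely, the covering conditions give `x` a neighbour whose `i`-th entry is one lower when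
`x_(i) = 2`, or when `x_(i) = 3` and `x ∈ S_i^k`; in the remaining case `x_(i) = 3`, `x_(t) = 1`,
the walk `i, (1,…,1), t, x` has length `3`.
-/

namespace SimpleGraph

variable {V : Type*} {G : SimpleGraph V} {f : V → ℕ}

theorem Walk.apply_le_apply_add_length (hf : ∀ ⦃a b⦄, G.Adj a b → f b ≤ f a + 1) {u v : V}
    (p : G.Walk u v) : f v ≤ f u + p.length := by
  induction p with
  | nil => simp
  | cons h _ ih =>
    have := hf h
    rw [Walk.length_cons]
    omega

theorem Reachable.apply_le_apply_add_dist (hf : ∀ ⦃a b⦄, G.Adj a b → f b ≤ f a + 1) {u v : V}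
    (h : G.Reachable u v) : f v ≤ f u + G.dist u v := by
  obtain ⟨p, hp⟩ := h.exists_walk_length_eq_dist
  exact hp ▸ p.apply_le_apply_add_length hf

end SimpleGraph

section comp3

variable {k : ℕ} {H2 : SimpleGraph (Fin k → Fin 3)} {i : Fin k} {x y : Fin k → Fin 3}

theorem comp3_injective : Function.Injective (comp3 (k := k)) := by
  intro H2 H2' h
  ext x y
  exact iff_of_eq (congrArg (fun G => G.Adj (Sum.inr x) (Sum.inr y)) h)

theorem cCond_of_comp3_mem_cset (h : comp3 H2 ∈ Cset k) : CCond H2 := by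
  obtain ⟨H2', hH2', heq⟩ := h
  exact comp3_injective heq ▸ hH2'

theorem CAdj.near3 (h : CAdj i x y) (t : Fin k) : near3 (x t) (y t) := by
  rcases eq_or_ne t i with rfl | ht
  · rcases h.1 with ⟨hx, hy⟩ | ⟨hx, hy⟩ <;> simp [_root_.near3, hx, hy]
  · exact h.2 t ht

theorem DAdj.near3 (h : DAdj i x y) (t : Fin k) : near3 (x t) (y t) := by
  rcases eq_or_ne t i with rfl | ht
  · rcases h.1 with ⟨hx, hy⟩ | ⟨hx, hy⟩ <;> simp [_root_.near3, hx, hy]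
  · exact h.2 t ht

theorem CAdj.apply_eq_zero (h : CAdj i x y) (hx : x i = 1) : y i = 0 := by
  rcases h.1 with ⟨hx', -⟩ | ⟨-, hy⟩
  · simp [hx] at hx'
  · exact hy

theorem DAdj.apply_eq_one (h : DAdj i x y) (hx : x i = 2) : y i = 1 := by
  rcases h.1 with ⟨hx', -⟩ | ⟨-, hy⟩
  · simp [hx] at hx'
  · exact hy

theorem CCond.le_gammaK (hC : CCond H2) : H2 ≤ GammaK k := by
  intro x y hxy
  obtain ⟨j, hj⟩ := hC.1 x y hxy
  exact (fromRel_adj _ _ _).2 ⟨hxy.ne, Or.inl (hj.elim CAdj.near3 DAdj.near3)⟩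

def comp3Potential (i : Fin k) : Fin k ⊕ (Fin k → Fin 3) → ℕ :=
  Sum.elim (fun j => if j = i then 0 else 2) (fun z => z i + 1)

theorem comp3Potential_le_of_adj (hH2 : H2 ≤ GammaK k) ⦃a b : Fin k ⊕ (Fin k → Fin 3)⦄
    (hab : (comp3 H2).Adj a b) : comp3Potential i b ≤ comp3Potential i a + 1 := by
  rcases a with j | z <;> rcases b with j' | z'
  · exact hab.elim
  · have hz' : z' j = 0 := hab
    rcases eq_or_ne j i with rfl | hj
    · simp [comp3Potential, hz']
    · simp [comp3Potential, hj]
  · simp only [comp3Potential, Sum.elim_inl, Sum.elim_inr]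
    split_ifs <;> omega
  · have hzz' : ∀ t, near3 (z t) (z' t) := by
      rcases ((fromRel_adj _ _ _).1 (hH2 hab)).2 with h | h
      · exact h
      · exact fun t => (h t).symm
    simpa [comp3Potential] using (hzz' i).2

theorem exists_walk_of_apply_eq_zero (hx : x i = 0) :
    ∃ p : (comp3 H2).Walk (Sum.inl i) (Sum.inr x), p.length = 1 :=
  ⟨.cons (show (comp3 H2).Adj (Sum.inl i) (Sum.inr x) from hx) .nil, rfl⟩

theorem exists_walk_of_apply_eq_one (hC : CCond H2) (hx : x i = 1) :
    ∃ p : (comp3 H2).Walk (Sum.inl i) (Sum.inr x), p.length = 2 := by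
  obtain ⟨y, hxy, hCxy⟩ := hC.2.1 i x hx
  obtain ⟨p, hp⟩ := exists_walk_of_apply_eq_zero (H2 := H2) (hCxy.apply_eq_zero hx)
  exact ⟨p.concat (show (comp3 H2).Adj (Sum.inr y) (Sum.inr x) from hxy.symm), by simp [hp]⟩

theorem exists_walk_of_apply_eq_two (hC : CCond H2) (hx : x i = 2) :
    ∃ p : (comp3 H2).Walk (Sum.inl i) (Sum.inr x), p.length = 3 := by
  by_cases hx0 : ∀ t, x t ≠ 0
  · obtain ⟨y, hxy, hDxy⟩ := hC.2.2 i x hx hx0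
    obtain ⟨p, hp⟩ := exists_walk_of_apply_eq_one hC (hDxy.apply_eq_one hx)
    exact ⟨p.concat (show (comp3 H2).Adj (Sum.inr y) (Sum.inr x) from hxy.symm), by simp [hp]⟩
  · obtain ⟨t, ht⟩ : ∃ t, x t = 0 := by simpa using hx0
    let ones : Fin k → Fin 3 := fun _ => 0
    exact ⟨.cons (show (comp3 H2).Adj (Sum.inl i) (Sum.inr ones) from rfl)
      (.cons (show (comp3 H2).Adj (Sum.inr ones) (Sum.inl t) from rfl)
        (.cons (show (comp3 H2).Adj (Sum.inl t) (Sum.inr x) from ht) .nil)), rfl⟩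

theorem exists_walk_length_eq (hC : CCond H2) (i : Fin k) (x : Fin k → Fin 3) :
    ∃ p : (comp3 H2).Walk (Sum.inl i) (Sum.inr x), p.length = (x i : ℕ) + 1 := by
  obtain hx | hx | hx : x i = 0 ∨ x i = 1 ∨ x i = 2 := by omega
  · simpa [hx] using exists_walk_of_apply_eq_zero hx
  · simpa [hx] using exists_walk_of_apply_eq_one hC hx
  · simpa [hx] using exists_walk_of_apply_eq_two hC hx

end comp3

theorem dist_comp3_general (k : ℕ) (H2 : SimpleGraph (Fin k → Fin 3))
    (h : comp3 H2 ∈ Cset k) (i : Fin k) (x : Fin k → Fin 3) :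
    (comp3 H2).dist (Sum.inl i) (Sum.inr x) = (x i : ℕ) + 1 := by
  have hC := cCond_of_comp3_mem_cset h
  obtain ⟨p, hp⟩ := exists_walk_length_eq hC i x
  refine le_antisymm (hp ▸ SimpleGraph.dist_le p) ?_
  simpa [comp3Potential] using
    p.reachable.apply_le_apply_add_dist (comp3Potential_le_of_adj (i := i) hC.le_gammaK)

/-- **Lemma.** If `H = K̄_[k] ∘ H2 ∈ C_k` (`k ≥ 2`), then for every `i ∈ [k]` and
`x ∈ [3]^k`, the distance in `H` from `i` to `x` equals `x_(i)` (the `Fin 3`-value `x i`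
codes the entry `(x i : ℕ) + 1`). -/
theorem dist_comp3 (k : ℕ) (hk : 2 ≤ k) (H2 : SimpleGraph (Fin k → Fin 3))
    (h : comp3 H2 ∈ Cset k) (i : Fin k) (x : Fin k → Fin 3) :
    (comp3 H2).dist (Sum.inl i) (Sum.inr x) = (x i : ℕ) + 1 :=
  dist_comp3_general k H2 h i x
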